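/- Let β > 0, λ± = (1±√β)², and define F(z,β) = (√(1+λ⁻ z) − √(1+λ⁺ z))² for real z > −1/λ⁺. Then for the Marchenko–Pastur density f_β(λ) = √((λ−λ⁻)⁺(λ⁺−λ)⁺)/(2πβλ) plus atom (1−1/β)⁺ at 0, one has ∫₀^∞ (zλ)/(1+zλ) f_β(λ) dλ = F(z,β)/(4zβ) for z ≠ 0. -/

import Mathlib

/-!
Off `[λ⁻, λ⁺]` the integrand vanishes, and on it the factor `λ` cancels, leaving
`∫ z √((λ - λ⁻)(λ⁺ - λ)) / (1 + zλ)`. The affine substitution `λ = m + r u` onto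
`[-1, 1]` turns this into `∫₋₁¹ √(1 - u²) / (κ + u) du` with `κ² > 1`, which has the
elementary primitive `√(1 - u²) + κ arcsin u - s arcsin ((1 + κu) / (κ + u))`, where
`s² = κ² - 1` and `s` has the sign of `κ` (so both signs of `z` are covered at once).
Its value `π (κ - s)` becomes `π (√(1 + λ⁻ z) - √(1 + λ⁺ z))² / (2z)` after undoing
the substitution.
-/

open MeasureTheory Real Set

lemma hasDerivAt_sqrt_one_sub_sq {u : ℝ} (hu : u ∈ Ioo (-1 : ℝ) 1) :
    HasDerivAt (fun v => √(1 - v ^ 2)) (-u / √(1 - u ^ 2)) u := by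
  have hpos : 0 < 1 - u ^ 2 := by nlinarith [hu.1, hu.2]
  refine ((((hasDerivAt_id u).pow 2).const_sub 1).sqrt hpos.ne').congr_deriv ?_
  have := (sqrt_pos.2 hpos).ne'
  simp only [Nat.cast_ofNat, id_eq, Nat.add_one_sub_one, pow_one, mul_one, Pi.pow_apply]
  field_simp

lemma hasDerivAt_arcsin_one_add_mul_div_add {κ s u : ℝ} (hs : s ^ 2 = κ ^ 2 - 1)
    (hsu : 0 < s * (κ + u)) (hu : u ∈ Ioo (-1 : ℝ) 1) :
    HasDerivAt (fun v => s * arcsin ((1 + κ * v) / (κ + v)))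
      (s ^ 2 / ((κ + u) * √(1 - u ^ 2))) u := by
  have hκu : κ + u ≠ 0 := by rintro h; simp [h] at hsu
  have hpos : 0 < 1 - u ^ 2 := by nlinarith [hu.1, hu.2]
  have hratio : 0 < s / (κ + u) := by
    rw [← mul_div_mul_right s _ hκu]; exact div_pos hsu (mul_self_pos.2 hκu)
  have hdiff : 1 - ((1 + κ * u) / (κ + u)) ^ 2 = (s / (κ + u)) ^ 2 * (1 - u ^ 2) := by
    field_simp
    linear_combination (-(1 - u ^ 2)) * hs
  have hsqrt : √(1 - ((1 + κ * u) / (κ + u)) ^ 2) = s / (κ + u) * √(1 - u ^ 2) := by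
    rw [hdiff, sqrt_mul (by positivity), sqrt_sq hratio.le]
  have hw : HasDerivAt (fun v => (1 + κ * v) / (κ + v)) (s ^ 2 / (κ + u) ^ 2) u := by
    refine ((((hasDerivAt_id u).const_mul κ).const_add 1).div
      ((hasDerivAt_id u).const_add κ) hκu).congr_deriv ?_
    rw [hs]; simp only [mul_one, id_eq]; ring
  have hw1 : |(1 + κ * u) / (κ + u)| < 1 := by
    rw [← sq_lt_one_iff_abs_lt_one]; nlinarith [hdiff, sq_pos_of_pos hratio]
  refine (((hasDerivAt_arcsin (abs_lt.1 hw1).1.ne' (abs_lt.1 hw1).2.ne).comp u hw).const_mul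
    s).congr_deriv ?_
  rw [hsqrt]
  field_simp

lemma mul_add_pos_of_sq_eq_sq_sub_one {κ s u : ℝ} (hs : s ^ 2 = κ ^ 2 - 1) (hsκ : 0 < s * κ)
    (hu : u ∈ Icc (-1 : ℝ) 1) : 0 < s * (κ + u) := by
  have hs0 : s ≠ 0 := left_ne_zero_of_mul hsκ.ne'
  have hu2 : 0 ≤ 1 - u ^ 2 := by nlinarith [hu.1, hu.2]
  have : (s * κ) ^ 2 - (s * u) ^ 2 = s ^ 2 * s ^ 2 + s ^ 2 * (1 - u ^ 2) := by
    linear_combination (-s ^ 2) * hs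
  nlinarith [pow_pos (sq_pos_of_ne_zero hs0) 2, mul_nonneg (sq_nonneg s) hu2]

lemma hasDerivAt_sqrt_one_sub_sq_add_arcsin_sub_arcsin {κ s u : ℝ} (hs : s ^ 2 = κ ^ 2 - 1)
    (hsu : 0 < s * (κ + u)) (hu : u ∈ Ioo (-1 : ℝ) 1) :
    HasDerivAt (fun v => √(1 - v ^ 2) + κ * arcsin v - s * arcsin ((1 + κ * v) / (κ + v)))
      (√(1 - u ^ 2) / (κ + u)) u := by
  have hκu : κ + u ≠ 0 := by rintro h; simp [h] at hsu
  have hpos : 0 < √(1 - u ^ 2) := sqrt_pos.2 (by nlinarith [hu.1, hu.2])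
  refine (((hasDerivAt_sqrt_one_sub_sq hu).add
    ((hasDerivAt_arcsin hu.1.ne' hu.2.ne).const_mul κ)).sub
      (hasDerivAt_arcsin_one_add_mul_div_add hs hsu hu)).congr_deriv ?_
  field_simp
  rw [hs, sq_sqrt (by nlinarith [hu.1, hu.2])]
  ring

lemma integral_sqrt_one_sub_sq_div_add {κ s : ℝ} (hs : s ^ 2 = κ ^ 2 - 1) (hsκ : 0 < s * κ) :
    ∫ u in (-1)..1, √(1 - u ^ 2) / (κ + u) = π * (κ - s) := by
  have hκu : ∀ u ∈ Icc (-1 : ℝ) 1, κ + u ≠ 0 := fun u hu h => by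
    simpa [h] using mul_add_pos_of_sq_eq_sq_sub_one hs hsκ hu
  let F : ℝ → ℝ := fun v =>
    √(1 - v ^ 2) + κ * arcsin v - s * arcsin ((1 + κ * v) / (κ + v))
  have hFcont : ContinuousOn F (Icc (-1) 1) := by
    have hw : ContinuousOn (fun v => (1 + κ * v) / (κ + v)) (Icc (-1) 1) :=
      ContinuousOn.div (by fun_prop) (by fun_prop) hκu
    have := continuous_arcsin.comp_continuousOn hw
    fun_prop
  have hint : IntervalIntegrable (fun u => √(1 - u ^ 2) / (κ + u)) volume (-1) 1 := by
    refine ContinuousOn.intervalIntegrable ?_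
    rw [uIcc_of_le (by norm_num)]
    exact ContinuousOn.div (by fun_prop) (by fun_prop) hκu
  have hF1 : F 1 = π / 2 * (κ - s) := by
    have : (1 + κ * 1) / (κ + 1) = 1 := by
      rw [mul_one, add_comm, div_self (hκu 1 (by norm_num))]
    simp only [F, this, arcsin_one]
    norm_num
    ring
  have hFm1 : F (-1) = -(π / 2) * (κ - s) := by
    have : (1 + κ * -1) / (κ + -1) = -1 := by
      rw [div_eq_iff (hκu (-1) (by norm_num))]; ring
    simp only [F, this, arcsin_neg_one]
    norm_num
    ring
  rw [intervalIntegral.integral_eq_sub_of_hasDerivAt_of_le (by norm_num) hFcont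
    (fun u hu => hasDerivAt_sqrt_one_sub_sq_add_arcsin_sub_arcsin hs
      (mul_add_pos_of_sq_eq_sq_sub_one hs hsκ (Ioo_subset_Icc_self hu)) hu) hint, hF1, hFm1]
  ring

lemma integral_mul_sqrt_div_one_add_mul {a b z : ℝ} (hab : a < b) (ha : 0 < 1 + a * z)
    (hb : 0 < 1 + b * z) (hz : z ≠ 0) :
    ∫ x in a..b, z * √((x - a) * (b - x)) / (1 + z * x)
      = π / (2 * z) * (√(1 + a * z) - √(1 + b * z)) ^ 2 := by
  set m := (a + b) / 2
  set r := (b - a) / 2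
  have hr : 0 < r := by simp only [r]; linarith
  set t := √((1 + a * z) * (1 + b * z))
  have ht : 0 < t := sqrt_pos.2 (mul_pos ha hb)
  set κ := (1 + z * m) / (z * r)
  set s := t / (z * r)
  have hs : s ^ 2 = κ ^ 2 - 1 := by
    simp only [s, κ, t]
    rw [div_pow, sq_sqrt (mul_pos ha hb).le]
    field_simp
    simp only [m, r]
    ring
  have hsκ : 0 < s * κ := by
    simp only [s, κ]
    rw [div_mul_div_comm, ← sq (z * r)]
    exact div_pos (mul_pos ht (by simp only [m]; linarith)) (by positivity)
  have hcomp : ∀ u, z * √((r * u + m - a) * (b - (r * u + m))) / (1 + z * (r * u + m))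
      = √(1 - u ^ 2) / (κ + u) := by
    intro u
    have : (r * u + m - a) * (b - (r * u + m)) = r ^ 2 * (1 - u ^ 2) := by
      simp only [m, r]; ring
    rw [this, sqrt_mul (sq_nonneg r), sqrt_sq hr.le]
    simp only [κ]
    field_simp
    ring
  have key := integral_sqrt_one_sub_sq_div_add hs hsκ
  simp only [← hcomp] at key
  rw [intervalIntegral.integral_comp_mul_add (fun x => z * √((x - a) * (b - x)) / (1 + z * x))
    hr.ne'] at key
  have hlo : r * -1 + m = a := by simp only [m, r]; ring
  have hhi : r * 1 + m = b := by simp only [m, r]; ring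
  rw [hlo, hhi, smul_eq_mul, inv_mul_eq_iff_eq_mul₀ hr.ne'] at key
  rw [key, sub_sq, sq_sqrt ha.le, sq_sqrt hb.le, mul_assoc 2, ← sqrt_mul ha.le]
  simp only [κ, s, m, t]
  field_simp
  ring

/-- Stieltjes-transform identity for the Marchenko–Pastur density: for `β > 0`,
`λ± = (1 ± √β)²`, `z > -1/λ⁺`, `z ≠ 0`, and
`F(z,β) = (√(1 + λ⁻ z) - √(1 + λ⁺ z))²`, one has
`∫₀^∞ (zλ)/(1 + zλ) f_β(λ) dλ = F(z,β) / (4 z β)`. -/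
theorem marchenkoPastur_stieltjes_identity (β z : ℝ) (hβ : 0 < β)
    (hz : -1 / (1 + Real.sqrt β) ^ 2 < z) (hz0 : z ≠ 0) :
    (∫ lam in Set.Ioi (0:ℝ), (z * lam) / (1 + z * lam) *
        (Real.sqrt (max (lam - (1 - Real.sqrt β) ^ 2) 0 *
            max ((1 + Real.sqrt β) ^ 2 - lam) 0)
          / (2 * Real.pi * β * lam)))
      = (Real.sqrt (1 + (1 - Real.sqrt β) ^ 2 * z)
          - Real.sqrt (1 + (1 + Real.sqrt β) ^ 2 * z)) ^ 2 / (4 * z * β) := by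
  set a := (1 - √β) ^ 2
  set b := (1 + √β) ^ 2
  have hab : a < b := by nlinarith [sqrt_pos.2 hβ]
  have hb : 0 < 1 + b * z := by
    have := (div_lt_iff₀ (by positivity)).1 hz; linarith
  have ha : 0 < 1 + a * z := by
    rcases le_or_gt 0 z with h | h <;> nlinarith [sq_nonneg (1 - √β)]
  have hsupp : ∀ lam ∈ Ioi 0 \ Ioo a b, z * lam / (1 + z * lam) *
      (√(max (lam - a) 0 * max (b - lam) 0) / (2 * π * β * lam)) = 0 := by
    rintro lam ⟨-, hlam⟩
    rcases le_or_gt lam a with h | h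
    · simp [max_eq_right (sub_nonpos.2 h)]
    · simp [max_eq_right (sub_nonpos.2 (not_lt.1 (fun h' => hlam ⟨h, h'⟩)))]
  have hbulk : ∀ lam ∈ Ioo a b, z * lam / (1 + z * lam) *
      (√(max (lam - a) 0 * max (b - lam) 0) / (2 * π * β * lam))
        = (2 * π * β)⁻¹ * (z * √((lam - a) * (b - lam)) / (1 + z * lam)) := by
    rintro lam ⟨hal, hlb⟩
    have : 0 < lam := (sq_nonneg _).trans_lt hal
    rw [max_eq_left (sub_nonneg.2 hal.le), max_eq_left (sub_nonneg.2 hlb.le)]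
    field_simp
  rw [setIntegral_eq_of_subset_of_forall_sdiff_eq_zero measurableSet_Ioi
      (fun lam hlam => (sq_nonneg _).trans_lt hlam.1) hsupp,
    setIntegral_congr_fun measurableSet_Ioo hbulk, integral_const_mul,
    ← integral_Ioc_eq_integral_Ioo, ← intervalIntegral.integral_of_le hab.le,
    integral_mul_sqrt_div_one_add_mul hab ha hb hz0]
  field_simp
  ring
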